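/- Under the hypotheses of the additive stability theorem (defect of the additive-cubic Jensen equation bounded by σ(u,v), with σ̂_A defined as the limit of max{|2|^{lβ} σ̄(u/2^{l+1}) : 0 ≤ l < j}), if additionally lim_{m→∞} lim_{j→∞} max{|2|^{(l+1)β} σ̄(u/2^{l+1}) : m ≤ l < j+m} = 0 for all u, then the additive mapping A with ‖F(2u) − 8F(u) − A(u)‖ ≤ (1/|2|^β) σ̂_A(u) is unique. -/

import Mathlib

open Filter Topology

/-- Hyers–Ulam stability of the additive part of the mixed additive–cubic Jensen
functional equation in a complete non-Archimedean β-normed space `T` over a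
non-Archimedean valued field `K`. -/
theorem additive_stability_uniqueness
    {S : Type*} [NormedAddCommGroup S] [NormedSpace ℝ S]
    {K : Type*} [Field K] (v : K → ℝ)
    (hv0 : ∀ a : K, v a = 0 ↔ a = 0) (hvnn : ∀ a : K, 0 ≤ v a)
    (hvmul : ∀ a b : K, v (a * b) = v a * v b)
    (hvadd : ∀ a b : K, v (a + b) ≤ max (v a) (v b))
    {T : Type*} [AddCommGroup T] [Module K T]
    (β : ℝ) (hβ0 : 0 < β) (hβ1 : β ≤ 1)
    (Nt : T → ℝ)
    (hN0 : ∀ x : T, Nt x = 0 ↔ x = 0)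
    (hNs : ∀ (a : K) (x : T), Nt (a • x) = v a ^ β * Nt x)
    (hNadd : ∀ x y : T, Nt (x + y) ≤ max (Nt x) (Nt y))
    -- completeness of T: any sequence whose consecutive differences tend to 0 converges
    (hcomplete : ∀ g : ℕ → T,
      Tendsto (fun j => Nt (g (j + 1) - g j)) atTop (𝓝 0) →
      ∃ L : T, Tendsto (fun j => Nt (g j - L)) atTop (𝓝 0))
    (σ : S → S → ℝ) (σbar σhatA : S → ℝ)
    (hσbar : ∀ u : S, σbar u =
      max (8 * σ u ((2 : ℝ) • u)) (2 * σ ((2 : ℝ) • u) ((2 : ℝ) • u)))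
    (hσlim : ∀ u w : S, Tendsto
      (fun j : ℕ => (v (2 : K) ^ j) ^ β * σ (((2 : ℝ) ^ j)⁻¹ • u) (((2 : ℝ) ^ j)⁻¹ • w))
      atTop (𝓝 0))
    (hσbarlim : ∀ u : S, Tendsto
      (fun j : ℕ => (v (2 : K) ^ j) ^ β * σbar (((2 : ℝ) ^ (j + 1))⁻¹ • u))
      atTop (𝓝 0))
    (hσhatA : ∀ u : S, Tendsto
      (fun j : ℕ => Finset.sup' (Finset.range (j + 1)) (Finset.nonempty_range_iff.mpr (by omega))
        (fun l => (v (2 : K) ^ l) ^ β * σbar (((2 : ℝ) ^ (l + 1))⁻¹ • u)))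
      atTop (𝓝 (σhatA u)))
    (F : S → T) (hF0 : F 0 = 0)
    (hD : ∀ u w : S,
      Nt ((2 : K) • F ((1/2 : ℝ) • ((2 : ℝ) • u + w)) +
          (2 : K) • F ((1/2 : ℝ) • ((2 : ℝ) • u - w)) -
          (4 : K)⁻¹ • (F (u + w) + F (u - w)) - (3 : K) • F u) ≤ σ u w)
    -- the iterated double limit condition:
    (g : S → ℕ → ℝ)
    (hg : ∀ (u : S) (m : ℕ), Tendsto
      (fun j : ℕ => Finset.sup' (Finset.Ico m (m + j + 1))
        (Finset.nonempty_Ico.mpr (by omega))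
        (fun l => (v (2 : K) ^ (l + 1)) ^ β * σbar (((2 : ℝ) ^ (l + 1))⁻¹ • u)))
      atTop (𝓝 (g u m)))
    (hg0 : ∀ u : S, Tendsto (fun m : ℕ => g u m) atTop (𝓝 0)) :
    ∀ A A' : S → T,
      ((∀ x y : S, A (x + y) = A x + A y) ∧
        ∀ u : S, Nt (F ((2 : ℝ) • u) - (8 : K) • F u - A u) ≤ (v (2 : K) ^ β)⁻¹ * σhatA u) →
      ((∀ x y : S, A' (x + y) = A' x + A' y) ∧
        ∀ u : S, Nt (F ((2 : ℝ) • u) - (8 : K) • F u - A' u) ≤ (v (2 : K) ^ β)⁻¹ * σhatA u) →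
      A = A' := by
  intro A A' hA hA'
  obtain ⟨hAadd, hAb⟩ := hA
  obtain ⟨hA'add, hA'b⟩ := hA'
  -- basic facts about v
  have hv1 : v 1 = 1 := by
    have h := hvmul 1 1
    rw [one_mul] at h
    have h0 : v 1 ≠ 0 := fun h' => one_ne_zero ((hv0 1).mp h')
    have h1 : v 1 * 1 = v 1 * v 1 := by rw [mul_one]; exact h
    exact (mul_left_cancel₀ h0 h1).symm
  have hvneg1 : v (-1) = 1 := by
    have h := hvmul (-1) (-1)
    rw [neg_mul_neg, one_mul, hv1] at h
    nlinarith [hvnn (-1)]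
  have hNneg : ∀ x : T, Nt (-x) = Nt x := by
    intro x
    have h := hNs (-1) x
    rw [neg_one_smul] at h
    rw [h, hvneg1, Real.one_rpow, one_mul]
  have hN0' : Nt 0 = 0 := (hN0 0).mpr rfl
  have hNnonneg : ∀ x : T, 0 ≤ Nt x := by
    intro x
    have h := hNadd x (-x)
    rw [add_neg_cancel, hN0', hNneg, max_self] at h
    exact h
  have hNsub : ∀ x y : T, Nt (x - y) ≤ max (Nt x) (Nt y) := by
    intro x y
    have h := hNadd x (-y)
    rw [hNneg] at h
    simpa [sub_eq_add_neg] using h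
  have hvpow : ∀ m : ℕ, v ((2:K)^m) = (v (2:K))^m := by
    intro m
    induction m with
    | zero => simpa using hv1
    | succ n ih => rw [pow_succ, pow_succ, hvmul, ih]
  -- additive maps scale by powers of 2
  have hscale : ∀ (B : S → T), (∀ x y, B (x+y) = B x + B y) →
      ∀ (m : ℕ) (x : S), B ((2:ℝ)^m • x) = (2:K)^m • B x := by
    intro B hB m
    induction m with
    | zero => intro x; simp
    | succ n ih =>
      intro x
      have hx : (2:ℝ)^(n+1) • x = (2:ℝ)^n • x + (2:ℝ)^n • x := by
        rw [← two_smul ℝ ((2:ℝ)^n • x), smul_smul]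
        ring_nf
      rw [hx, hB, ih, ← two_smul K ((2:K)^n • B x), smul_smul, ← pow_succ']
  funext u
  rw [← sub_eq_zero, ← hN0]
  by_cases hv2 : v (2:K) = 0
  · -- degenerate case: the bounds are exactly 0
    have hb0 : (v (2 : K) ^ β)⁻¹ = 0 := by
      rw [hv2, Real.zero_rpow hβ0.ne', inv_zero]
    have e1 : A u = F ((2:ℝ) • u) - (8:K) • F u := by
      have h := hAb u
      rw [hb0, zero_mul] at h
      have h0 : F ((2:ℝ) • u) - (8:K) • F u - A u = 0 :=
        (hN0 _).mp (le_antisymm h (hNnonneg _))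
      have := sub_eq_zero.mp h0
      rw [this]
    have e2 : A' u = F ((2:ℝ) • u) - (8:K) • F u := by
      have h := hA'b u
      rw [hb0, zero_mul] at h
      have h0 : F ((2:ℝ) • u) - (8:K) • F u - A' u = 0 :=
        (hN0 _).mp (le_antisymm h (hNnonneg _))
      have := sub_eq_zero.mp h0
      rw [this]
    rw [e1, e2, sub_self, hN0']
  · have hv2pos : 0 < v (2:K) := lt_of_le_of_ne (hvnn _) (Ne.symm hv2)
    have hvb : 0 < v (2:K) ^ β := Real.rpow_pos_of_pos hv2pos β
    -- key estimate for each m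
    have key : ∀ m : ℕ, Nt (A u - A' u) ≤ ((v (2:K) ^ β)⁻¹)^2 * g u m := by
      intro m
      set w : S := ((2:ℝ)^m)⁻¹ • u with hw
      have hu : (2:ℝ)^m • w = u := by
        rw [hw, smul_smul, mul_inv_cancel₀ (pow_ne_zero m two_ne_zero), one_smul]
      -- scaling identity
      have e1 : Nt (A u - A' u) = ((v (2:K))^m)^β * Nt (A w - A' w) := by
        have : A u - A' u = (2:K)^m • (A w - A' w) := by
          rw [← hu, hscale A hAadd, hscale A' hA'add, smul_sub]
        rw [this, hNs, hvpow]
      -- bound on Nt (A w - A' w)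
      have e2 : Nt (A w - A' w) ≤ (v (2 : K) ^ β)⁻¹ * σhatA w := by
        have hd : A w - A' w =
            (F ((2:ℝ) • w) - (8:K) • F w - A' w) - (F ((2:ℝ) • w) - (8:K) • F w - A w) := by
          abel
        rw [hd]
        exact le_trans (hNsub _ _) (max_le (hA'b w) (hAb w))
      set c : ℝ := ((v (2:K))^(m+1))^β with hcdef
      have hc : (0:ℝ) ≤ c := Real.rpow_nonneg (pow_nonneg (hvnn _) _) _
      -- pointwise identity
      have hpoint : ∀ l : ℕ, c * ((v (2 : K) ^ l) ^ β * σbar (((2 : ℝ) ^ (l + 1))⁻¹ • w)) =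
          (v (2 : K) ^ (m + l + 1)) ^ β * σbar (((2 : ℝ) ^ (m + l + 1))⁻¹ • u) := by
        intro l
        have harg : ((2 : ℝ) ^ (l + 1))⁻¹ • w = ((2 : ℝ) ^ (m + l + 1))⁻¹ • u := by
          rw [hw, smul_smul, ← mul_inv, ← pow_add,
            show l + 1 + m = m + l + 1 from by omega]
        have hcoef : c * (v (2 : K) ^ l) ^ β = (v (2 : K) ^ (m + l + 1)) ^ β := by
          rw [hcdef, ← Real.mul_rpow (pow_nonneg (hvnn _) _) (pow_nonneg (hvnn _) _),
            ← pow_add, show m + 1 + l = m + l + 1 from by omega]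
        rw [harg, ← mul_assoc, hcoef]
      -- identify g u m with c * σhatA w
      have hgid : g u m = c * σhatA w := by
        have hlim1 : Tendsto
            (fun j : ℕ => c *
              Finset.sup' (Finset.range (j + 1)) (Finset.nonempty_range_iff.mpr (by omega))
                (fun l => (v (2 : K) ^ l) ^ β * σbar (((2 : ℝ) ^ (l + 1))⁻¹ • w)))
            atTop (𝓝 (c * σhatA w)) := (hσhatA w).const_mul _
        have heq : ∀ j : ℕ, c *
              Finset.sup' (Finset.range (j + 1)) (Finset.nonempty_range_iff.mpr (by omega))
                (fun l => (v (2 : K) ^ l) ^ β * σbar (((2 : ℝ) ^ (l + 1))⁻¹ • w)) =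
            Finset.sup' (Finset.Ico m (m + j + 1)) (Finset.nonempty_Ico.mpr (by omega))
                (fun l => (v (2 : K) ^ (l + 1)) ^ β * σbar (((2 : ℝ) ^ (l + 1))⁻¹ • u)) := by
          intro j
          rw [Finset.comp_sup'_eq_sup'_comp _ (fun x : ℝ => c * x)
            (fun x y => mul_max_of_nonneg x y hc)]
          apply le_antisymm
          · apply Finset.sup'_le
            intro l hl
            simp only [Finset.mem_range] at hl
            apply Finset.le_sup'_of_le _ (b := m + l)
            · simp only [Finset.mem_Ico]
              omega
            · apply le_of_eq
              simp only [Function.comp_apply]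
              rw [hpoint l]
          · apply Finset.sup'_le
            intro l hl
            simp only [Finset.mem_Ico] at hl
            apply Finset.le_sup'_of_le _ (b := l - m)
            · simp only [Finset.mem_range]
              omega
            · apply le_of_eq
              simp only [Function.comp_apply]
              rw [hpoint (l - m), show m + (l - m) + 1 = l + 1 from by omega]
        simp only [heq] at hlim1
        exact tendsto_nhds_unique (hg u m) hlim1
      have e3 : c = v (2:K) ^ β * ((v (2:K))^m)^β := by
        rw [hcdef, pow_succ, Real.mul_rpow (pow_nonneg (hvnn _) _) (hvnn _), mul_comm]
      calc Nt (A u - A' u) ≤ ((v (2:K))^m)^β * ((v (2 : K) ^ β)⁻¹ * σhatA w) := by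
            rw [e1]
            exact mul_le_mul_of_nonneg_left e2 (Real.rpow_nonneg (pow_nonneg (hvnn _) _) _)
        _ = ((v (2:K) ^ β)⁻¹)^2 * g u m := by
            rw [hgid, e3]
            field_simp
    -- conclude
    have hlim0 : Tendsto (fun m : ℕ => ((v (2:K) ^ β)⁻¹)^2 * g u m) atTop (𝓝 0) := by
      simpa only [mul_zero] using (hg0 u).const_mul (((v (2:K) ^ β)⁻¹)^2)
    have hle : Nt (A u - A' u) ≤ 0 := ge_of_tendsto' hlim0 key
    exact le_antisymm hle (hNnonneg _)
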